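/- arXiv:1712.01587 — 5 statements merged into one kernel-verified Lean document; each statement's English description precedes it below -/
import Mathlib

section
/- Fix an integer k ≥ 2 and let ζ = exp(2πi/k). Let D ≤ SL(3,ℂ) be the subgroup generated by diag(ζ,1,ζ⁻¹) and diag(1,ζ,ζ⁻¹). Let x, y, z ∈ ℂ all be nonzero. Then the D-orbit of [x:y:z] ∈ ℙ² has at least k elements, and if it has fewer than k² elements then 3 divides k. -/
open Matrix Complex

noncomputable section

abbrev M3 : Type := Matrix (Fin 3) (Fin 3) ℂ
abbrev SL3 : Type := Matrix.SpecialLinearGroup (Fin 3) ℂ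
abbrev P2 : Type := Projectivization ℂ (Fin 3 → ℂ)

/-- The matrix `M_τ`. -/
def Mtau : M3 := !![0,1,0; 0,0,1; 1,0,0]

/-- `ζ_n = exp(2πi/n)`. -/
def zeta (n : ℕ) : ℂ := Complex.exp (2 * Real.pi * Complex.I / n)

/-- The subgroup of `SL(3,ℂ)` generated by a given set of matrices. -/
def genSL (s : Set M3) : Subgroup SL3 :=
  Subgroup.closure { g : SL3 | (g : M3) ∈ s }

/-- The orbit of a point of `ℙ²` under a set of (invertible) matrices,
acting by `[v] ↦ [g·v]`. -/
def projOrbit (G : Set M3) (p : P2) : Set P2 :=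
  { q | ∃ g ∈ G, ∃ h : g.mulVec p.rep ≠ 0, Projectivization.mk ℂ (g.mulVec p.rep) h = q }

/-- The orbit of a point of `ℙ²` under a subgroup of `SL(3,ℂ)`. -/
def projOrbitSL (G : Subgroup SL3) (p : P2) : Set P2 :=
  projOrbit ((fun g : SL3 => (g : M3)) '' (G : Set SL3)) p

/-- The point `[x:y:z] ∈ ℙ²`. -/
def pt (x y z : ℂ) (h : ![x,y,z] ≠ 0) : P2 := Projectivization.mk ℂ ![x,y,z] h

lemma vne₀ {x y z : ℂ} (hx : x ≠ 0) : ![x,y,z] ≠ 0 := by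
  intro h; exact hx (by simpa using congrFun h 0)

lemma vne₁ {x y z : ℂ} (hy : y ≠ 0) : ![x,y,z] ≠ 0 := by
  intro h; exact hy (by simpa using congrFun h 1)

lemma vne₂ {x y z : ℂ} (hz : z ≠ 0) : ![x,y,z] ≠ 0 := by
  intro h; exact hz (by simpa using congrFun h 2)

/-- No three distinct points of `P` are collinear. -/
def NoThreeCollinear (P : Set P2) : Prop :=
  ∀ p q r, p ∈ P → q ∈ P → r ∈ P → p ≠ q → p ≠ r → q ≠ r →
    LinearIndependent ℂ ![p.rep, q.rep, r.rep]

/-- The points of `P` all lie on a conic. -/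
def LiesOnConic (P : Set P2) : Prop :=
  ∃ Q : QuadraticForm ℂ (Fin 3 → ℂ), Q ≠ 0 ∧ ∀ p ∈ P, Q p.rep = 0

/-!
The group `D` contains every `diag(s, t, (st)⁻¹)` with `s, t` ranging over the `k`-th roots of
unity. At a point with nonzero coordinates two such matrices give the same point of `ℙ²` only if
they differ by a scalar `c`, and then `c³ = 1`. Taking `t = 1` forces `c = 1`, which gives `k`
distinct points; if `3 ∤ k`, a `k`-th root of unity with `c³ = 1` is trivial, which gives `k²`.
-/

open Projectivization

theorem Matrix.SpecialLinearGroup.mulVec_ne_zero {n R : Type*} [Fintype n] [DecidableEq n]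
    [CommRing R] (g : SpecialLinearGroup n R) {v : n → R} (hv : v ≠ 0) :
    (g : Matrix n n R) *ᵥ v ≠ 0 := by
  have hg : IsUnit (g : Matrix n n R) := (isUnit_iff_isUnit_det _).mpr (by simp)
  exact fun h => hv (mulVec_injective_of_isUnit hg (h.trans (mulVec_zero _).symm))

def diagSL (K : Type*) [Field K] : Kˣ × Kˣ →* SpecialLinearGroup (Fin 3) K where
  toFun st := ⟨diagonal ![(st.1 : K), st.2, ((st.1 : K) * st.2)⁻¹], by
    rw [det_diagonal, Fin.prod_univ_three]
    exact mul_inv_cancel₀ (by simp)⟩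
  map_one' := by ext i j; fin_cases i <;> fin_cases j <;> simp
  map_mul' st st' := Subtype.ext <| by
    change diagonal _ = diagonal _ * diagonal _
    rw [diagonal_mul_diagonal]
    congr 1
    ext i
    (fin_cases i <;> simp); ring

@[simp] lemma coe_diagSL {K : Type*} [Field K] (st : Kˣ × Kˣ) :
    (diagSL K st : Matrix (Fin 3) (Fin 3) K) =
      diagonal ![(st.1 : K), st.2, ((st.1 : K) * st.2)⁻¹] :=
  rfl

lemma mk_mulVec_mem_projOrbitSL {G : Subgroup SL3} {g : SL3} (hg : g ∈ G)
    {v : Fin 3 → ℂ} (hv : v ≠ 0) :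
    mk ℂ ((g : M3) *ᵥ v) (g.mulVec_ne_zero hv) ∈ projOrbitSL G (mk ℂ v hv) := by
  obtain ⟨a, ha⟩ := (mk_eq_mk_iff ℂ _ v (mk ℂ v hv).rep_nonzero hv).mp (mk_rep _)
  have hrep : (g : M3) *ᵥ (mk ℂ v hv).rep = a • ((g : M3) *ᵥ v) := by
    rw [← ha, Units.smul_def, Units.smul_def, mulVec_smul]
  refine ⟨g, ⟨g, hg, rfl⟩, hrep ▸ smul_ne_zero a.ne_zero (g.mulVec_ne_zero hv), ?_⟩
  exact (mk_eq_mk_iff ℂ _ _ _ _).mpr ⟨a, hrep.symm⟩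

variable {K : Type*} [Field K]

lemma exists_smul_eq_of_mk_diagonal_mulVec_eq {n : Type*} [Fintype n] [DecidableEq n]
    {d d' w : n → K} (hw : ∀ i, w i ≠ 0) {hd : diagonal d *ᵥ w ≠ 0} {hd' : diagonal d' *ᵥ w ≠ 0}
    (h : mk K (diagonal d *ᵥ w) hd = mk K (diagonal d' *ᵥ w) hd') : ∃ c : Kˣ, c • d' = d := by
  obtain ⟨c, hc⟩ := (mk_eq_mk_iff K _ _ hd hd').mp h
  refine ⟨c, funext fun i => mul_right_cancel₀ (hw i) ?_⟩
  rw [Pi.smul_apply, smul_mul_assoc]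
  simpa [mulVec_diagonal] using congrFun hc i

def diagPoint (w : Fin 3 → K) (hw : w ≠ 0) (st : Kˣ × Kˣ) : Projectivization K (Fin 3 → K) :=
  mk K (diagSL K st *ᵥ w) ((diagSL K st).mulVec_ne_zero hw)

lemma exists_cube_eq_one_of_diagPoint_eq {w : Fin 3 → K} (hw : ∀ i, w i ≠ 0) {hw₀ : w ≠ 0}
    {st st' : Kˣ × Kˣ} (h : diagPoint w hw₀ st = diagPoint w hw₀ st') :
    ∃ c : Kˣ, c ^ 3 = 1 ∧ st = (c, c) * st' := by
  obtain ⟨s, t⟩ := st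
  obtain ⟨s', t'⟩ := st'
  obtain ⟨c, hc⟩ := exists_smul_eq_of_mk_diagonal_mulVec_eq hw h
  have hs : c * s' = s := Units.ext (by simpa [Units.smul_def] using congrFun hc 0)
  have ht : c * t' = t := Units.ext (by simpa [Units.smul_def] using congrFun hc 1)
  have hst : (c : K) * ((s' : K) * t')⁻¹ = ((s : K) * t)⁻¹ := by
    simpa [Units.smul_def] using congrFun hc 2
  refine ⟨c, Units.ext ?_, Prod.ext hs.symm ht.symm⟩
  rw [← hs, ← ht] at hst
  push_cast at hst
  field_simp at hst
  simpa using hst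

lemma injOn_diagPoint_prod_one {w : Fin 3 → K} (hw : ∀ i, w i ≠ 0) {hw₀ : w ≠ 0} :
    Set.InjOn (diagPoint w hw₀) (Set.univ ×ˢ {1}) := by
  rintro ⟨s, t⟩ ⟨-, ht⟩ ⟨s', t'⟩ ⟨-, ht'⟩ h
  obtain ⟨c, -, hst⟩ := exists_cube_eq_one_of_diagPoint_eq hw h
  simp only [Set.mem_singleton_iff] at ht ht'
  subst ht ht'
  have hc : c = 1 := by simpa using (congrArg Prod.snd hst).symm
  simpa [hc] using hst

lemma injOn_diagPoint_rootsOfUnity {n : ℕ} (h3 : Nat.Coprime 3 n) {w : Fin 3 → K}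
    (hw : ∀ i, w i ≠ 0) {hw₀ : w ≠ 0} :
    Set.InjOn (diagPoint w hw₀) ((rootsOfUnity n K : Set Kˣ) ×ˢ (rootsOfUnity n K : Set Kˣ)) := by
  rintro st ⟨hs, -⟩ st' ⟨hs', -⟩ h
  obtain ⟨c, hc3, rfl⟩ := exists_cube_eq_one_of_diagPoint_eq hw h
  have hcn : c ^ n = 1 := (mem_rootsOfUnity n c).mp ((Subgroup.mul_mem_cancel_right _ hs').mp hs)
  simp [(pow_eq_one_iff_of_coprime h3).mp ⟨hc3, hcn⟩]

lemma Complex.encard_rootsOfUnity (n : ℕ) [NeZero n] :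
    (rootsOfUnity n ℂ : Set ℂˣ).encard = n := by
  rw [← ENat.card_coe_set_eq, SetLike.coe_sort_coe, ENat.card_eq_coe_natCard,
    Complex.card_rootsOfUnity]

lemma diagSL_mem_genSL {k : ℕ} [NeZero k] {s t : ℂˣ} (hs : s ∈ rootsOfUnity k ℂ)
    (ht : t ∈ rootsOfUnity k ℂ) :
    diagSL ℂ (s, t) ∈ genSL {diagonal ![zeta k, 1, (zeta k)⁻¹],
      diagonal ![1, zeta k, (zeta k)⁻¹]} := by
  have hζ : IsPrimitiveRoot (zeta k) k := Complex.isPrimitiveRoot_exp k (NeZero.ne k)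
  set u : ℂˣ := (hζ.isUnit (NeZero.ne k)).unit
  have hu : IsPrimitiveRoot u k := IsPrimitiveRoot.coe_units_iff.mp hζ
  rw [← hu.zpowers_eq] at hs ht
  obtain ⟨i, rfl⟩ := Subgroup.mem_zpowers_iff.mp hs
  obtain ⟨j, rfl⟩ := Subgroup.mem_zpowers_iff.mp ht
  have hsplit : ((u ^ i, u ^ j) : ℂˣ × ℂˣ) = (u, 1) ^ i * (1, u) ^ j := by simp
  rw [hsplit, map_mul, map_zpow, map_zpow]
  refine mul_mem (zpow_mem (Subgroup.subset_closure ?_) _)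
    (zpow_mem (Subgroup.subset_closure ?_) _)
  · left; simp [u]
  · right; simp [u]

lemma mapsTo_diagPoint_projOrbitSL {k : ℕ} [NeZero k] {v : Fin 3 → ℂ} (hv : v ≠ 0) :
    Set.MapsTo (diagPoint v hv) ((rootsOfUnity k ℂ : Set ℂˣ) ×ˢ (rootsOfUnity k ℂ : Set ℂˣ))
      (projOrbitSL (genSL {diagonal ![zeta k, 1, (zeta k)⁻¹],
        diagonal ![1, zeta k, (zeta k)⁻¹]}) (mk ℂ v hv)) :=
  fun _ hst => mk_mulVec_mem_projOrbitSL (diagSL_mem_genSL hst.1 hst.2) hv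

theorem statement2_general (k : ℕ) (x y z : ℂ) (hx : x ≠ 0) (hy : y ≠ 0) (hz : z ≠ 0)
    (D : Subgroup SL3)
    (hD : D = genSL {Matrix.diagonal ![zeta k, 1, (zeta k)⁻¹],
                     Matrix.diagonal ![1, zeta k, (zeta k)⁻¹]}) :
    (k : ℕ∞) ≤ (projOrbitSL D (pt x y z (vne₀ hx))).encard ∧
    ((projOrbitSL D (pt x y z (vne₀ hx))).encard < ((k ^ 2 : ℕ) : ℕ∞) → 3 ∣ k) := by
  obtain rfl | hk := eq_or_ne k 0
  · simp
  have : NeZero k := ⟨hk⟩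
  subst hD
  have hw : ∀ i : Fin 3, ![x, y, z] i ≠ 0 := by simp [Fin.forall_fin_succ, hx, hy, hz]
  set μ : Set ℂˣ := (rootsOfUnity k ℂ : Set ℂˣ)
  have hmaps := mapsTo_diagPoint_projOrbitSL (k := k) (vne₀ (y := y) (z := z) hx)
  constructor
  · calc (k : ℕ∞) = (μ ×ˢ {1}).encard := by
          simp [μ, Set.encard_prod, Complex.encard_rootsOfUnity]
      _ ≤ _ := Set.encard_le_encard_of_injOn
          (hmaps.mono_left (Set.prod_mono_right (Set.singleton_subset_iff.2 (one_mem _))))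
          ((injOn_diagPoint_prod_one hw).mono (Set.prod_mono_left (Set.subset_univ _)))
  · intro hlt
    by_contra h3
    have hcop : Nat.Coprime 3 k := (Nat.Prime.coprime_iff_not_dvd Nat.prime_three).mpr h3
    refine hlt.not_ge ?_
    calc ((k ^ 2 : ℕ) : ℕ∞) = (μ ×ˢ μ).encard := by
          rw [Set.encard_prod, Complex.encard_rootsOfUnity]; push_cast; ring
      _ ≤ _ := Set.encard_le_encard_of_injOn hmaps (injOn_diagPoint_rootsOfUnity hcop hw)

/-- For `k ≥ 2`, `ζ = exp(2πi/k)` and `D ≤ SL(3,ℂ)` generated by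
`diag(ζ,1,ζ⁻¹)` and `diag(1,ζ,ζ⁻¹)`, and `x, y, z` all nonzero, the `D`-orbit of
`[x:y:z]` has at least `k` elements, and if it has fewer than `k²` elements then `3 ∣ k`. -/
theorem statement2 (k : ℕ) (hk : 2 ≤ k) (x y z : ℂ) (hx : x ≠ 0) (hy : y ≠ 0) (hz : z ≠ 0)
    (D : Subgroup SL3)
    (hD : D = genSL {Matrix.diagonal ![zeta k, 1, (zeta k)⁻¹],
                     Matrix.diagonal ![1, zeta k, (zeta k)⁻¹]}) :
    (k : ℕ∞) ≤ (projOrbitSL D (pt x y z (vne₀ hx))).encard ∧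
    ((projOrbitSL D (pt x y z (vne₀ hx))).encard < ((k ^ 2 : ℕ) : ℕ∞) → 3 ∣ k) :=
  statement2_general k x y z hx hy hz D hD
end
end

section
/- Fix an integer k ≥ 2 and let ζ = exp(2πi/k). Let D ≤ SL(3,ℂ) be the subgroup generated by diag(ζ,1,ζ⁻¹) and diag(1,ζ,ζ⁻¹). Let x, y, z ∈ ℂ all be nonzero, and suppose the D-orbit of [x:y:z] ∈ ℙ² has fewer than k² elements and at most 8 elements. Then k = 3 and the orbit has exactly 3 elements. -/
open Matrix Complex

noncomputable section

/-!
`D` is the image of `(ZMod k)²` under `(a, b) ↦ diag(ζ^a, ζ^b, ζ^(-a-b))`, and such a diagonal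
matrix fixes a point with no zero coordinate iff it is scalar, i.e. iff `a = b` and `3a = 0`.
By orbit–stabilizer the orbit therefore has `k² / gcd(k, 3)` points. Having fewer than `k²`
points forces `3 ∣ k`, and then `k² / 3 ≤ 8` forces `k = 3`.
-/

open MulAction Multiplicative

theorem MonoidHom.ncard_orbit_range_mul_card_comap_stabilizer {G H X : Type*} [Group G]
    [Group H] [MulAction H X] (ρ : G →* H) (x : X) :
    (orbit ρ.range x).ncard * Nat.card ((stabilizer H x).comap ρ) = Nat.card G := by
  let _ : MulAction G X := MulAction.compHom X ρ
  have horbit : orbit ρ.range x = orbit G x := by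
    ext y
    simp only [mem_orbit_iff, Subtype.exists, MonoidHom.mem_range, Subgroup.mk_smul,
      exists_prop, exists_exists_eq_and]
    rfl
  have hstab : (stabilizer H x).comap ρ = stabilizer G x := rfl
  rw [horbit, hstab, ← index_stabilizer, Subgroup.index_mul_card]

theorem Projectivization.mk_mul_eq_mk_iff {ι K : Type*} [Field K] {d v : ι → K}
    (hv : ∀ i, v i ≠ 0) (hdv : d * v ≠ 0) (hv₀ : v ≠ 0) :
    mk K (d * v) hdv = mk K v hv₀ ↔ ∃ c, ∀ i, d i = c := by
  rw [mk_eq_mk_iff]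
  constructor
  · rintro ⟨a, ha⟩
    refine ⟨a, fun i => mul_right_cancel₀ (hv i) ?_⟩
    simpa [Units.smul_def] using (congrFun ha i).symm
  · rintro ⟨c, hc⟩
    have hc₀ : c ≠ 0 := by
      rintro rfl
      exact hdv (funext fun i => by simp [hc i])
    exact ⟨Units.mk0 c hc₀, funext fun i => by simp [hc i]⟩

theorem Nat.eq_three_of_mul_gcd_three_eq_sq {n k : ℕ} (hcard : n * k.gcd 3 = k ^ 2)
    (hlt : n < k ^ 2) (hle : n ≤ 8) : k = 3 ∧ n = 3 := by
  have hgcd : k.gcd 3 = 1 ∨ k.gcd 3 = 3 :=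
    (Nat.dvd_prime Nat.prime_three).mp (Nat.gcd_dvd_right k 3)
  rcases hgcd with h | h
  · rw [h, mul_one] at hcard
    omega
  · have h3k : 3 ∣ k := h ▸ Nat.gcd_dvd_left k 3
    rw [h] at hcard
    have hk4 : k ≤ 4 := by nlinarith
    interval_cases k <;> omega

theorem projOrbitSL_eq_orbit (G : Subgroup SL3) (p : P2) : projOrbitSL G p = orbit G p := by
  ext q
  constructor
  · rintro ⟨_, ⟨g, hg, rfl⟩, h, rfl⟩
    refine ⟨⟨g, hg⟩, ?_⟩
    conv_lhs => rw [← p.mk_rep]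
    rfl
  · rintro ⟨g, rfl⟩
    refine ⟨g, ⟨g, g.2, rfl⟩, (smul_ne_zero_iff_ne g).mpr p.rep_nonzero, ?_⟩
    conv_rhs => rw [← p.mk_rep]
    rfl

namespace DiagonalTorus

variable (k : ℕ) [NeZero k]

-- `ψ a = ζ ^ a.val` with `ζ = zeta k`
local notation "ψ" => (ZMod.stdAddChar : AddChar (ZMod k) ℂ)

def weights (p : ZMod k × ZMod k) : Fin 3 → ℂ := ![ψ p.1, ψ p.2, ψ (-(p.1 + p.2))]

lemma weights_add (p q : ZMod k × ZMod k) : weights k (p + q) = weights k p * weights k q := by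
  ext i
  fin_cases i <;> simp [weights, AddChar.map_add_eq_mul]
  ring

lemma prod_weights (p : ZMod k × ZMod k) : ∏ i, weights k p i = 1 := by
  simp [weights, Fin.prod_univ_three, ← AddChar.map_add_eq_mul]

lemma weights_zero : weights k 0 = 1 := by
  ext i
  fin_cases i <;> simp [weights]

def diagSL (p : ZMod k × ZMod k) : SL3 :=
  ⟨diagonal (weights k p), by rw [det_diagonal, prod_weights]⟩

lemma coe_diagSL (p : ZMod k × ZMod k) : (diagSL k p : M3) = diagonal (weights k p) := rfl

def diagHom : Multiplicative (ZMod k × ZMod k) →* SL3 where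
  toFun p := diagSL k p.toAdd
  map_one' := Subtype.ext <| by simp [coe_diagSL, weights_zero]
  map_mul' p q := Subtype.ext <| by
    simp only [toAdd_mul, Matrix.SpecialLinearGroup.coe_mul, coe_diagSL, weights_add,
      diagonal_mul_diagonal]
    rfl

lemma diagHom_apply (p : Multiplicative (ZMod k × ZMod k)) : diagHom k p = diagSL k (toAdd p) :=
  rfl

lemma diagHom_smul (p : Multiplicative (ZMod k × ZMod k)) (v : Fin 3 → ℂ) :
    diagHom k p • v = weights k p.toAdd * v := by
  ext i
  simp only [Matrix.SpecialLinearGroup.smul_def, smul_eq_mulVec, Pi.mul_apply]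
  exact mulVec_diagonal _ _ _

lemma stdAddChar_one_eq_zeta : ψ 1 = zeta k := by
  simpa [zeta] using ZMod.stdAddChar_coe (N := k) 1

lemma coe_diagHom_ofAdd_one_zero :
    (diagHom k (ofAdd (1, 0)) : M3) = diagonal ![zeta k, 1, (zeta k)⁻¹] := by
  rw [diagHom_apply, coe_diagSL]
  congr 1
  ext i
  fin_cases i <;> simp [weights, stdAddChar_one_eq_zeta, AddChar.map_neg_eq_inv]

lemma coe_diagHom_ofAdd_zero_one :
    (diagHom k (ofAdd (0, 1)) : M3) = diagonal ![1, zeta k, (zeta k)⁻¹] := by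
  rw [diagHom_apply, coe_diagSL]
  congr 1
  ext i
  fin_cases i <;> simp [weights, stdAddChar_one_eq_zeta, AddChar.map_neg_eq_inv]

lemma eq_ofAdd_pow_mul_ofAdd_pow (p : Multiplicative (ZMod k × ZMod k)) :
    p = ofAdd (1, 0) ^ (toAdd p).1.val * ofAdd (0, 1) ^ (toAdd p).2.val := by
  apply toAdd.injective
  ext <;> simp

theorem genSL_eq_range_diagHom :
    genSL {diagonal ![zeta k, 1, (zeta k)⁻¹], diagonal ![1, zeta k, (zeta k)⁻¹]} =
      (diagHom k).range := by
  refine le_antisymm ((Subgroup.closure_le _).mpr ?_) ?_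
  · rintro g (hg | hg)
    · exact ⟨ofAdd (1, 0), Subtype.ext ((coe_diagHom_ofAdd_one_zero k).trans hg.symm)⟩
    · exact ⟨ofAdd (0, 1), Subtype.ext ((coe_diagHom_ofAdd_zero_one k).trans hg.symm)⟩
  · rintro _ ⟨p, rfl⟩
    rw [eq_ofAdd_pow_mul_ofAdd_pow k p, map_mul, map_pow, map_pow]
    exact mul_mem
      (pow_mem (Subgroup.subset_closure (by left; exact coe_diagHom_ofAdd_one_zero k)) _)
      (pow_mem (Subgroup.subset_closure (by right; exact coe_diagHom_ofAdd_zero_one k)) _)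

lemma exists_weights_eq_iff (a b : ZMod k) :
    (∃ c, ∀ i, weights k (a, b) i = c) ↔ a = b ∧ 3 • a = 0 := by
  constructor
  · rintro ⟨c, hc⟩
    have h₀ := hc 0
    have h₁ := hc 1
    have h₂ := hc 2
    simp only [weights, Matrix.cons_val_zero, Matrix.cons_val_one, Matrix.cons_val_two,
      Matrix.head_cons, Matrix.tail_cons] at h₀ h₁ h₂
    obtain rfl : a = b := ZMod.injective_stdAddChar (h₀.trans h₁.symm)
    have ha : a = -(a + a) := ZMod.injective_stdAddChar (h₀.trans h₂.symm)
    refine ⟨rfl, ?_⟩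
    rw [nsmul_eq_mul, Nat.cast_ofNat]
    linear_combination ha
  · rintro ⟨rfl, ha⟩
    rw [nsmul_eq_mul, Nat.cast_ofNat] at ha
    have ha' : -(a + a) = a := by linear_combination -ha
    exact ⟨ψ a, fun i => by fin_cases i <;> simp [weights, ha']⟩

lemma mem_comap_stabilizer_pt_iff {x y z : ℂ} (hx : x ≠ 0) (hy : y ≠ 0) (hz : z ≠ 0)
    (h : ![x, y, z] ≠ 0) (p : Multiplicative (ZMod k × ZMod k)) :
    p ∈ (stabilizer SL3 (pt x y z h)).comap (diagHom k) ↔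
      (toAdd p).1 = (toAdd p).2 ∧ 3 • (toAdd p).1 = 0 := by
  have hv : ∀ i, ![x, y, z] i ≠ 0 := by
    intro i
    fin_cases i <;> assumption
  rw [Subgroup.mem_comap, mem_stabilizer_iff, pt, Projectivization.smul_mk]
  simp only [diagHom_smul]
  rw [Projectivization.mk_mul_eq_mk_iff hv, ← exists_weights_eq_iff]

def comapStabilizerPtEquiv {x y z : ℂ} (hx : x ≠ 0) (hy : y ≠ 0) (hz : z ≠ 0)
    (h : ![x, y, z] ≠ 0) :
    (stabilizer SL3 (pt x y z h)).comap (diagHom k) ≃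
      (nsmulAddMonoidHom 3 : ZMod k →+ ZMod k).ker where
  toFun g := ⟨(toAdd g.1).1, ((mem_comap_stabilizer_pt_iff k hx hy hz h g).mp g.2).2⟩
  invFun t := ⟨ofAdd (t.1, t.1), (mem_comap_stabilizer_pt_iff k hx hy hz h _).mpr ⟨rfl, t.2⟩⟩
  left_inv g :=
    Subtype.ext (Prod.ext rfl ((mem_comap_stabilizer_pt_iff k hx hy hz h g).mp g.2).1)
  right_inv _ := rfl

theorem card_comap_stabilizer_pt {x y z : ℂ} (hx : x ≠ 0) (hy : y ≠ 0) (hz : z ≠ 0)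
    (h : ![x, y, z] ≠ 0) :
    Nat.card ((stabilizer SL3 (pt x y z h)).comap (diagHom k)) = k.gcd 3 := by
  rw [Nat.card_congr (comapStabilizerPtEquiv k hx hy hz h),
    IsAddCyclic.card_nsmulAddMonoidHom_ker, Nat.card_zmod]

end DiagonalTorus

/-- For `k ≥ 2`, `ζ = exp(2πi/k)` and `D ≤ SL(3,ℂ)` generated by
`diag(ζ,1,ζ⁻¹)` and `diag(1,ζ,ζ⁻¹)`, and `x, y, z` all nonzero, if the `D`-orbit of
`[x:y:z]` has fewer than `k²` elements and at most `8` elements, then `k = 3` and the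
orbit has exactly `3` elements. -/
theorem statement3 (k : ℕ) (hk : 2 ≤ k) (x y z : ℂ) (hx : x ≠ 0) (hy : y ≠ 0) (hz : z ≠ 0)
    (D : Subgroup SL3)
    (hD : D = genSL {Matrix.diagonal ![zeta k, 1, (zeta k)⁻¹],
                     Matrix.diagonal ![1, zeta k, (zeta k)⁻¹]})
    (hlt : (projOrbitSL D (pt x y z (vne₀ hx))).encard < ((k ^ 2 : ℕ) : ℕ∞))
    (hle : (projOrbitSL D (pt x y z (vne₀ hx))).encard ≤ 8) :
    k = 3 ∧ (projOrbitSL D (pt x y z (vne₀ hx))).encard = 3 := by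
  have : NeZero k := ⟨by omega⟩
  rw [hD, DiagonalTorus.genSL_eq_range_diagHom, projOrbitSL_eq_orbit] at hlt hle ⊢
  set O := orbit (DiagonalTorus.diagHom k).range (pt x y z (vne₀ hx))
  have hcard : O.ncard * k.gcd 3 = k ^ 2 := by
    rw [← DiagonalTorus.card_comap_stabilizer_pt k hx hy hz (vne₀ hx),
      MonoidHom.ncard_orbit_range_mul_card_comap_stabilizer]
    simp [sq]
  have : Finite (DiagonalTorus.diagHom k).range :=
    Finite.of_surjective _ (DiagonalTorus.diagHom k).rangeRestrict_surjective
  rw [← (Finite.finite_mulAction_orbit _).cast_ncard_eq] at hlt hle ⊢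
  norm_cast at hlt hle ⊢
  exact Nat.eq_three_of_mul_gcd_three_eq_sq hcard hlt hle
end
end

section
/- For integers a, k ≥ 1 let g₍ₐ,ₖ₎ = diag(ζ_k, ζ_k^a, ζ_k^{-(a+1)}) ∈ SL(3,ℂ) and let T₍ₐ,ₖ₎ ≤ SL(3,ℂ) be the subgroup generated by g₍ₐ,ₖ₎ and M_τ; let W = ζ₃·I₃ be the scalar matrix with entries ζ₃. Then: (i) T₍₁₆,₂₁₎ equals the subgroup generated by T₍₂,₇₎ together with W; (ii) T₍₄,₂₁₎ equals the subgroup generated by T₍₄,₇₎ together with W; (iii) there exists h ∈ SL(3,ℂ) with h·T₍₂,₇₎·h⁻¹ = T₍₄,₇₎. -/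
open Matrix Complex

noncomputable section

/-- The underlying set of matrices of a subgroup of `SL(3,ℂ)`. -/
def matSet (G : Subgroup SL3) : Set M3 := (fun g : SL3 => (g : M3)) '' (G : Set SL3)

/-- `g₍ₐ,ₖ₎ = diag(ζ_k, ζ_k^a, ζ_k^{-(a+1)})`. -/
def gMat (a k : ℕ) : M3 := Matrix.diagonal ![zeta k, zeta k ^ a, (zeta k ^ (a + 1))⁻¹]

/-- `T₍ₐ,ₖ₎`, the subgroup of `SL(3,ℂ)` generated by `g₍ₐ,ₖ₎` and `M_τ`. -/
def Tgrp (a k : ℕ) : Subgroup SL3 := genSL {gMat a k, Mtau}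

/-- The scalar matrix `W = ζ₃·I₃`. -/
def Wmat : M3 := zeta 3 • (1 : M3)

/-! Since `gcd(3, 7) = 1`, the cyclic group generated by `g₍ₐ,₂₁₎` is generated by its cube
`g₍ₐ,₂₁₎³ = g₍ₐ mod 7, 7₎` and its seventh power `g₍ₐ,₂₁₎⁷ = g₍₁,₃₎ = W` (as `a ≡ 1 mod 3`);
adding `M_τ` to both sides gives (i) and (ii). For (iii), conjugation by `-P`, where `P` swaps the
last two coordinates, swaps the last two diagonal entries of `g₍₂,₇₎ = diag(ζ₇, ζ₇², ζ₇⁴)`, which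
gives `g₍₄,₇₎`, and inverts the cyclic permutation `M_τ`. -/

theorem Subgroup.zpowers_eq_zpowers_pow_sup_zpowers_pow {G : Type*} [Group G] (x : G) {m n : ℕ}
    (hmn : m.Coprime n) : zpowers x = zpowers (x ^ m) ⊔ zpowers (x ^ n) := by
  refine le_antisymm ?_ (sup_le (zpowers_le.2 (pow_mem (mem_zpowers x) m))
    (zpowers_le.2 (pow_mem (mem_zpowers x) n)))
  rw [zpowers_le]
  have hx : (x ^ m) ^ m.gcdA n * (x ^ n) ^ m.gcdB n = x := by
    rw [← zpow_natCast, ← zpow_natCast, ← _root_.zpow_mul, ← _root_.zpow_mul, ← _root_.zpow_add,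
      ← Nat.gcd_eq_gcd_ab, hmn, Nat.cast_one, zpow_one]
  have hmem : (x ^ m) ^ m.gcdA n * (x ^ n) ^ m.gcdB n ∈ zpowers (x ^ m) ⊔ zpowers (x ^ n) :=
    mul_mem (zpow_mem (mem_sup_left (mem_zpowers _)) _) (zpow_mem (mem_sup_right (mem_zpowers _)) _)
  rwa [hx] at hmem

lemma genSL_union (s t : Set M3) : genSL (s ∪ t) = genSL s ⊔ genSL t :=
  Subgroup.closure_union _ _

lemma genSL_matSet (G : Subgroup SL3) : genSL (matSet G) = G := by
  refine (congrArg Subgroup.closure ?_).trans (Subgroup.closure_eq G)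
  ext g
  exact Subtype.val_injective.mem_set_image

lemma genSL_singleton {A : M3} (hA : A.det = 1) : genSL {A} = Subgroup.zpowers ⟨A, hA⟩ := by
  refine (congrArg Subgroup.closure ?_).trans (Subgroup.zpowers_eq_closure _).symm
  ext g
  exact ⟨fun h => Subtype.ext h, congrArg Subtype.val⟩

lemma zeta_pow_self (n : ℕ) : zeta n ^ n = 1 := by
  rcases eq_or_ne n 0 with rfl | hn
  · exact pow_zero _
  · exact (isPrimitiveRoot_exp n hn).pow_eq_one

lemma zeta_pow_eq_pow_of_modEq {n a b : ℕ} (h : a ≡ b [MOD n]) : zeta n ^ a = zeta n ^ b :=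
  pow_eq_pow_of_modEq h (zeta_pow_self n)

lemma zeta_mul_pow {m : ℕ} (l : ℕ) (hm : m ≠ 0) : zeta (m * l) ^ m = zeta l := by
  have hm' : (m : ℂ) ≠ 0 := Nat.cast_ne_zero.2 hm
  rw [zeta, zeta, ← Complex.exp_nat_mul, Nat.cast_mul, mul_div_assoc', mul_div_mul_left _ _ hm']

lemma det_gMat (a k : ℕ) : (gMat a k).det = 1 := by
  have h : zeta k ^ (a + 1) ≠ 0 := pow_ne_zero _ (Complex.exp_ne_zero _)
  rw [gMat, det_diagonal, Fin.prod_univ_three]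
  simp only [Fin.isValue, cons_val_zero, cons_val_one, cons_val_two, tail_cons, head_cons]
  rw [← pow_succ', mul_inv_cancel₀ h]

lemma gMat_eq_diagonal {a k r : ℕ} (h : a + 1 + r ≡ 0 [MOD k]) :
    gMat a k = diagonal ![zeta k, zeta k ^ a, zeta k ^ r] := by
  have hinv : (zeta k ^ (a + 1))⁻¹ = zeta k ^ r := by
    refine inv_eq_of_mul_eq_one_right ?_
    rw [← pow_add, zeta_pow_eq_pow_of_modEq h, pow_zero]
  rw [gMat, hinv]

lemma gMat_pow {a b m l : ℕ} (hm : m ≠ 0) (h : a ≡ b [MOD l]) :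
    gMat a (m * l) ^ m = gMat b l := by
  rw [gMat, gMat, diagonal_pow]
  congr 1
  ext i
  fin_cases i <;>
    simp only [Pi.pow_apply, Fin.zero_eta, Fin.mk_one, Fin.reduceFinMk, cons_val_zero,
      cons_val_one, cons_val_two, tail_cons, head_cons, inv_pow]
  · exact zeta_mul_pow l hm
  · rw [pow_right_comm, zeta_mul_pow l hm, zeta_pow_eq_pow_of_modEq h]
  · rw [pow_right_comm, zeta_mul_pow l hm, zeta_pow_eq_pow_of_modEq (h.add_right 1)]

lemma gMat_one_three : gMat 1 3 = Wmat := by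
  rw [gMat_eq_diagonal (r := 1) (by decide), Wmat, smul_one_eq_diagonal, pow_one]
  congr 1
  ext i
  fin_cases i <;> rfl

lemma det_Mtau : Mtau.det = 1 := by
  simp [Mtau, det_fin_three]

def Pmat : M3 := !![-1,0,0; 0,0,-1; 0,-1,0]

lemma det_Pmat : Pmat.det = 1 := by
  simp [Pmat, det_fin_three]

lemma Pmat_mul_diagonal (x y z : ℂ) :
    Pmat * diagonal ![x, y, z] = diagonal ![x, z, y] * Pmat := by
  ext i j
  fin_cases i <;> fin_cases j <;> simp [Pmat, mul_apply, diagonal_apply]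

lemma Mtau_mul_Pmat_mul_Mtau : Mtau * Pmat * Mtau = Pmat := by
  simp [Mtau, Pmat]

def gSL (a k : ℕ) : SL3 := ⟨gMat a k, det_gMat a k⟩
def tSL : SL3 := ⟨Mtau, det_Mtau⟩
def pSL : SL3 := ⟨Pmat, det_Pmat⟩

lemma gSL_pow {a b m l : ℕ} (hm : m ≠ 0) (h : a ≡ b [MOD l]) : gSL a (m * l) ^ m = gSL b l :=
  Subtype.ext (gMat_pow hm h)

lemma Tgrp_eq_sup (a k : ℕ) : Tgrp a k = Subgroup.zpowers (gSL a k) ⊔ Subgroup.zpowers tSL := by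
  rw [Tgrp, Set.insert_eq, genSL_union, genSL_singleton (det_gMat a k), genSL_singleton det_Mtau]
  rfl

lemma Tgrp_mul_eq_genSL {a b c m n : ℕ} (hm : m ≠ 0) (hn : n ≠ 0) (hmn : m.Coprime n)
    (hb : a ≡ b [MOD n]) (hc : a ≡ c [MOD m]) :
    Tgrp a (m * n) = genSL (matSet (Tgrp b n) ∪ {gMat c m}) := by
  have hpow_n : gSL a (m * n) ^ n = gSL c m := by
    rw [mul_comm]
    exact gSL_pow hn hc
  rw [genSL_union, genSL_matSet, genSL_singleton (det_gMat c m), Tgrp_eq_sup, Tgrp_eq_sup,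
    Subgroup.zpowers_eq_zpowers_pow_sup_zpowers_pow _ hmn, gSL_pow hm hb, hpow_n]
  exact sup_right_comm _ _ _

lemma map_conj_pSL_Tgrp {a b k : ℕ} (h : a + 1 + b ≡ 0 [MOD k]) :
    Subgroup.map (MulAut.conj pSL).toMonoidHom (Tgrp a k) = Tgrp b k := by
  have h' : b + 1 + a ≡ 0 [MOD k] := by
    rwa [show b + 1 + a = a + 1 + b by ring]
  have hg : MulAut.conj pSL (gSL a k) = gSL b k := by
    rw [MulAut.conj_apply, mul_inv_eq_iff_eq_mul]
    refine Subtype.ext ?_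
    change Pmat * gMat a k = gMat b k * Pmat
    rw [gMat_eq_diagonal h, gMat_eq_diagonal h', Pmat_mul_diagonal]
  have ht : MulAut.conj pSL tSL = tSL⁻¹ := by
    rw [MulAut.conj_apply, mul_inv_eq_iff_eq_mul, eq_inv_mul_iff_mul_eq, ← mul_assoc]
    exact Subtype.ext Mtau_mul_Pmat_mul_Mtau
  rw [Tgrp_eq_sup, Tgrp_eq_sup, Subgroup.map_sup, MonoidHom.map_zpowers, MonoidHom.map_zpowers,
    MulEquiv.coe_toMonoidHom, hg, ht, Subgroup.zpowers_inv]

/-- (i) `T₍₁₆,₂₁₎` is generated by `T₍₂,₇₎` together with `W`;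
(ii) `T₍₄,₂₁₎` is generated by `T₍₄,₇₎` together with `W`;
(iii) `T₍₂,₇₎` and `T₍₄,₇₎` are conjugate in `SL(3,ℂ)`. -/
theorem statement4 :
    Tgrp 16 21 = genSL (matSet (Tgrp 2 7) ∪ {Wmat}) ∧
    Tgrp 4 21 = genSL (matSet (Tgrp 4 7) ∪ {Wmat}) ∧
    ∃ h : SL3, Subgroup.map (MulAut.conj h).toMonoidHom (Tgrp 2 7) = Tgrp 4 7 := by
  rw [← gMat_one_three]
  refine ⟨?_, ?_, pSL, map_conj_pSL_Tgrp (by decide)⟩ <;>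
    exact Tgrp_mul_eq_genSL (m := 3) (n := 7) three_ne_zero (by decide) (by decide) (by decide)
      (by decide)
end
end

section
/- Let T ≤ SL(3,ℂ) be the subgroup generated by diag(1,-1,-1), diag(-1,1,-1), M_τ, let ω = ζ₃, and let O₁, O₂, O₃ be the T-orbits on ℙ² of [1:1:1], [1:ω:ω²], [1:ω²:ω] respectively. Then: every point [x:y:z] of O₂ ∪ O₃ satisfies x² + y² + z² = 0; every point [x:y:z] of O₁ ∪ O₃ satisfies ωx² − (1+ω)y² + z² = 0; and every point [x:y:z] of O₁ ∪ O₂ satisfies ωx² + y² − (1+ω)z² = 0. -/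
open Matrix Complex

noncomputable section

/-- The subgroup of `SL(3,ℂ)` generated by `diag(1,-1,-1)`, `diag(-1,1,-1)` and `M_τ`. -/
def TA4 : Subgroup SL3 :=
  genSL {Matrix.diagonal ![1, -1, -1], Matrix.diagonal ![-1, 1, -1], Mtau}

/-- The three orbits `O₁`, `O₂`, `O₃` of `[1:1:1]`, `[1:ω:ω²]`, `[1:ω²:ω]` (with `ω = ζ₃`). -/
def O₁ : Set P2 := projOrbitSL TA4 (pt 1 1 1 (vne₀ one_ne_zero))
def O₂ : Set P2 := projOrbitSL TA4 (pt 1 (zeta 3) (zeta 3 ^ 2) (vne₀ one_ne_zero))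
def O₃ : Set P2 := projOrbitSL TA4 (pt 1 (zeta 3 ^ 2) (zeta 3) (vne₀ one_ne_zero))

/-!
Each of the three conics is diagonal, `w₀x² + w₁y² + w₂z² = 0`, with weights `(1, 1, 1)`,
`(ω, ω², 1)` and `(ω, 1, ω²)` (recall `-(1 + ω) = ω²`). The sign changes `diag(±1, ±1, ±1)` fix
every diagonal form, and `M_τ` shifts the weights cyclically, which for these three weight
vectors just multiplies the form by the nonzero scalar `1`, `ω²`, `ω`. So every element of `T`
preserves the zero set of each form, and since the forms are homogeneous this zero set is a
well-defined subset of `ℙ²`. Finally each conic passes through its two base points because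
`1 + ω + ω² = 0`.
-/

namespace Matrix.SpecialLinearGroup

variable {n K : Type*} [Fintype n] [DecidableEq n] [CommRing K]

def zeroLocusStabilizer (f : (n → K) → K) : Subgroup (SpecialLinearGroup n K) where
  carrier := {g | ∀ v, f ((g : Matrix n n K) *ᵥ v) = 0 ↔ f v = 0}
  one_mem' := by simp
  mul_mem' {g h} hg hh v := by rw [coe_mul, ← mulVec_mulVec, hg, hh]
  inv_mem' {g} hg v := by
    rw [← hg, mulVec_mulVec, ← coe_mul, mul_inv_cancel, coe_one, one_mulVec]

lemma mem_zeroLocusStabilizer_of_map_mulVec [NoZeroDivisors K] {f : (n → K) → K}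
    {g : SpecialLinearGroup n K} {s : K} (hs : s ≠ 0)
    (hg : ∀ v, f ((g : Matrix n n K) *ᵥ v) = s * f v) : g ∈ zeroLocusStabilizer f := fun v => by
  rw [hg, mul_eq_zero, or_iff_right hs]

end Matrix.SpecialLinearGroup

open Matrix.SpecialLinearGroup

namespace QuadraticMap

lemma map_rep_mk_eq_zero_iff {K V : Type*} [Field K] [AddCommGroup V] [Module K V]
    (Q : QuadraticMap K V K) {v : V} (hv : v ≠ 0) :
    Q (Projectivization.mk K v hv).rep = 0 ↔ Q v = 0 := by
  obtain ⟨a, ha⟩ := Projectivization.exists_smul_eq_mk_rep K v hv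
  rw [← ha, Units.smul_def, QuadraticMap.map_smul, smul_eq_mul, mul_eq_zero,
    or_iff_right (mul_self_ne_zero.2 a.ne_zero)]

lemma map_rep_eq_zero_of_mem_projOrbitSL (Q : QuadraticForm ℂ (Fin 3 → ℂ)) {G : Subgroup SL3}
    (hG : G ≤ zeroLocusStabilizer Q) {p q : P2} (hp : Q p.rep = 0)
    (hq : q ∈ projOrbitSL G p) : Q q.rep = 0 := by
  obtain ⟨_, ⟨g, hg, rfl⟩, hne, rfl⟩ := hq
  exact (Q.map_rep_mk_eq_zero_iff hne).2 ((hG hg _).2 hp)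

lemma weightedSumSquares_diagonal_mulVec {ι R : Type*} [Fintype ι] [DecidableEq ι] [CommRing R]
    (w : ι → R) {d : ι → R} (hd : ∀ i, d i * d i = 1) (v : ι → R) :
    weightedSumSquares R w (diagonal d *ᵥ v) = weightedSumSquares R w v := by
  simp only [weightedSumSquares_apply, mulVec_diagonal, smul_eq_mul]
  refine Finset.sum_congr rfl fun i _ => ?_
  linear_combination w i * v i * v i * hd i

lemma weightedSumSquares_Mtau_mulVec {w : Fin 3 → ℂ} {s : ℂ} (h₀ : w 0 = s * w 1)
    (h₁ : w 1 = s * w 2) (h₂ : w 2 = s * w 0) (v : Fin 3 → ℂ) :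
    weightedSumSquares ℂ w (Mtau *ᵥ v) = s * weightedSumSquares ℂ w v := by
  simp only [Mtau, cons_mulVec, dotProduct, Fin.sum_univ_three, cons_val_zero, cons_val_one,
    cons_val, zero_mul, one_mul, zero_add, add_zero, empty_mulVec, weightedSumSquares_apply,
    smul_eq_mul]
  linear_combination v 1 * v 1 * h₀ + v 2 * v 2 * h₁ + v 0 * v 0 * h₂

end QuadraticMap

open QuadraticMap

lemma TA4_le_zeroLocusStabilizer {w : Fin 3 → ℂ} {s : ℂ} (hs : s ≠ 0) (h₀ : w 0 = s * w 1)
    (h₁ : w 1 = s * w 2) (h₂ : w 2 = s * w 0) :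
    TA4 ≤ zeroLocusStabilizer (weightedSumSquares ℂ w) := by
  have hsign : ∀ d : Fin 3 → ℂ, (∀ i, d i * d i = 1) → ∀ g : SL3, (g : M3) = diagonal d →
      g ∈ zeroLocusStabilizer (weightedSumSquares ℂ w) := fun d hd g hg =>
    mem_zeroLocusStabilizer_of_map_mulVec one_ne_zero fun v => by
      rw [hg, weightedSumSquares_diagonal_mulVec w hd, one_mul]
  refine Subgroup.closure_le _ |>.2 ?_
  rintro g (hg | hg | hg)
  · exact hsign _ (fun i => by fin_cases i <;> norm_num) g hg
  · exact hsign _ (fun i => by fin_cases i <;> norm_num) g hg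
  · exact mem_zeroLocusStabilizer_of_map_mulVec hs fun v => by
      rw [hg, weightedSumSquares_Mtau_mulVec h₀ h₁ h₂]

lemma diagonalConic_eq_zero_of_mem_TA4_orbit {a b c s : ℂ} (hs : s ≠ 0) (ha : a = s * b)
    (hb : b = s * c) (hc : c = s * a) (x y z : ℂ) (hv : ![x, y, z] ≠ 0)
    (h : a * x ^ 2 + b * y ^ 2 + c * z ^ 2 = 0) :
    ∀ q ∈ projOrbitSL TA4 (pt x y z hv),
      a * q.rep 0 ^ 2 + b * q.rep 1 ^ 2 + c * q.rep 2 ^ 2 = 0 := by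
  have hQ : ∀ v : Fin 3 → ℂ, weightedSumSquares ℂ ![a, b, c] v =
      a * v 0 ^ 2 + b * v 1 ^ 2 + c * v 2 ^ 2 := fun v => by
    simp [weightedSumSquares_apply, Fin.sum_univ_three, pow_two]
  intro q hq
  rw [← hQ]
  refine map_rep_eq_zero_of_mem_projOrbitSL _ (TA4_le_zeroLocusStabilizer hs ha hb hc) ?_ hq
  rw [pt, map_rep_mk_eq_zero_iff, hQ]
  simpa using h

lemma isPrimitiveRoot_zeta {n : ℕ} (hn : n ≠ 0) : IsPrimitiveRoot (zeta n) n :=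
  Complex.isPrimitiveRoot_exp n hn

lemma one_add_zeta_three_add_sq : 1 + zeta 3 + zeta 3 ^ 2 = 0 := by
  simpa [Finset.sum_range_succ] using (isPrimitiveRoot_zeta three_ne_zero).geom_sum_eq_zero
    (by norm_num)

/-- with `ω = ζ₃`, every point `[x:y:z]` of `O₂ ∪ O₃` satisfies
`x² + y² + z² = 0`; every point of `O₁ ∪ O₃` satisfies `ωx² − (1+ω)y² + z² = 0`; and every
point of `O₁ ∪ O₂` satisfies `ωx² + y² − (1+ω)z² = 0`. -/
theorem statement9 :
    (∀ q ∈ O₂ ∪ O₃,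
      (Projectivization.rep q 0) ^ 2 + (Projectivization.rep q 1) ^ 2 +
        (Projectivization.rep q 2) ^ 2 = 0) ∧
    (∀ q ∈ O₁ ∪ O₃,
      zeta 3 * (Projectivization.rep q 0) ^ 2 - (1 + zeta 3) * (Projectivization.rep q 1) ^ 2 +
        (Projectivization.rep q 2) ^ 2 = 0) ∧
    (∀ q ∈ O₁ ∪ O₂,
      zeta 3 * (Projectivization.rep q 0) ^ 2 + (Projectivization.rep q 1) ^ 2 -
        (1 + zeta 3) * (Projectivization.rep q 2) ^ 2 = 0) := by
  have hζ := isPrimitiveRoot_zeta three_ne_zero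
  have hsum := one_add_zeta_three_add_sq
  set ω := zeta 3
  have hcube : ω ^ 3 = 1 := hζ.pow_eq_one
  have hω : ω ≠ 0 := hζ.ne_zero three_ne_zero
  have C₁ := diagonalConic_eq_zero_of_mem_TA4_orbit (a := 1) (b := 1) (c := 1) one_ne_zero
    (by ring) (by ring) (by ring)
  have C₂ := diagonalConic_eq_zero_of_mem_TA4_orbit (a := ω) (b := -(1 + ω)) (c := 1)
    (pow_ne_zero 2 hω) (by linear_combination hsum + hcube) (by linear_combination -hsum)
    (by linear_combination -hcube)
  have C₃ := diagonalConic_eq_zero_of_mem_TA4_orbit (a := ω) (b := 1) (c := -(1 + ω)) hω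
    (by ring) (by linear_combination hsum) (by linear_combination -hsum)
  refine ⟨?_, ?_, ?_⟩ <;> rintro q (hq | hq)
  · linear_combination
      C₁ 1 ω (ω ^ 2) (vne₀ one_ne_zero) (by linear_combination hsum + ω * hcube) q hq
  · linear_combination
      C₁ 1 (ω ^ 2) ω (vne₀ one_ne_zero) (by linear_combination hsum + ω * hcube) q hq
  · linear_combination C₂ 1 1 1 (vne₀ one_ne_zero) (by ring) q hq
  · linear_combination
      C₂ 1 (ω ^ 2) ω (vne₀ one_ne_zero) (by linear_combination -(ω + ω ^ 2) * hcube) q hq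
  · linear_combination C₃ 1 1 1 (vne₀ one_ne_zero) (by ring) q hq
  · linear_combination
      C₃ 1 ω (ω ^ 2) (vne₀ one_ne_zero) (by linear_combination -(ω + ω ^ 2) * hcube) q hq
end
end

section
/- Let G ≤ SL(3,ℂ) be the subgroup generated by diag(1,-1,-1), diag(-1,1,-1), M_τ, and the matrix σ with rows (-1,0,0), (0,0,-1), (0,-1,0). Then G has order 24, G is isomorphic to the symmetric group S₄ on 4 letters, and the identity matrix is the only scalar matrix contained in G. -/
open Matrix Complex

noncomputable section

/-- The subgroup of `SL(3,ℂ)` generated by `diag(1,-1,-1)`, `diag(-1,1,-1)`, `M_τ` and `σ`,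
where `σ` has rows `(-1,0,0)`, `(0,0,-1)`, `(0,-1,0)`. -/
def GS4 : Subgroup SL3 :=
  genSL {Matrix.diagonal ![1, -1, -1], Matrix.diagonal ![-1, 1, -1], Mtau,
         !![-1,0,0; 0,0,-1; 0,-1,0]}


/-!
`G` is the rotation group of the cube `[-1, 1]³`, and it acts faithfully on the four body
diagonals `±d₀, …, ±d₃`. We realise the inverse isomorphism explicitly: `σ ∈ S₄` goes to the
integer matrix sending `d_b` to `sign σ • d_{σ b}`. This is an injective homomorphism
`S₄ → SL(3, ℤ)` (a finite check), and the four generators of `G` are the images of four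
permutations generating `S₄`, so its image in `SL(3, ℂ)` is `G`. A scalar matrix in the image is
`a • 1` with `a ∈ ℤ` and `a ^ 3 = 1`, hence the identity.
-/

open Equiv

namespace Matrix.SpecialLinearGroup

variable {n : Type*} [Fintype n] [DecidableEq n]

theorem map_injective {R S : Type*} [CommRing R] [CommRing S] {f : R →+* S}
    (hf : Function.Injective f) : Function.Injective (map (n := n) f) :=
  fun _ _ h => Subtype.ext (Matrix.map_injective hf (congrArg Subtype.val h))

theorem eq_one_of_map_eq_smul_one {R : Type*} [CommRing R] [CharZero R]
    (hn : Odd (Fintype.card n)) (A : SpecialLinearGroup n ℤ) {c : R}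
    (h : (map (Int.castRingHom R) A : Matrix n n R) = c • 1) : A = 1 := by
  obtain ⟨i₀⟩ : Nonempty n := Fintype.card_pos_iff.mp hn.pos
  have hc : c = A i₀ i₀ := by simpa using (congrFun (congrFun h i₀) i₀).symm
  have hA : (A : Matrix n n ℤ) = A i₀ i₀ • 1 := by
    ext i j
    apply Int.cast_injective (α := R)
    simpa [hc, Matrix.one_apply] using congrFun (congrFun h i) j
  have hpow : A i₀ i₀ ^ Fintype.card n = 1 := by
    have hdet := A.det_coe
    rwa [hA, det_smul, det_one, mul_one] at hdet
  have ha : A i₀ i₀ = 1 :=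
    ((pow_eq_one_iff_of_ne_zero hn.pos.ne').mp hpow).resolve_right
      fun h => Nat.not_even_iff_odd.mpr hn h.2
  exact Subtype.ext (by rw [hA, ha, one_smul, coe_one])

end Matrix.SpecialLinearGroup

open Matrix

def cubeDiagonal : Fin 4 → Fin 3 → ℤ := ![![1, 1, 1], ![1, -1, -1], ![-1, 1, -1], ![-1, -1, 1]]

/-- Writing `d = cubeDiagonal`, we have `∑ b, d_b d_bᵀ = 4 • 1`, so the division is exact and this
is the matrix sending `d_b` to `sign σ • d_{σ b}`; the sign makes its determinant `1`. -/
def cubeRotationMatrix (σ : Perm (Fin 4)) : Matrix (Fin 3) (Fin 3) ℤ :=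
  Matrix.of fun i j => Perm.sign σ * (∑ b, cubeDiagonal (σ b) i * cubeDiagonal b j) / 4

theorem cubeRotationMatrix_one : cubeRotationMatrix 1 = 1 := by decide

set_option maxHeartbeats 4000000 in
theorem cubeRotationMatrix_mul : ∀ σ τ : Perm (Fin 4),
    cubeRotationMatrix (σ * τ) = cubeRotationMatrix σ * cubeRotationMatrix τ := by decide

set_option maxHeartbeats 4000000 in
theorem cubeRotationMatrix_injective : Function.Injective cubeRotationMatrix := by
  unfold Function.Injective; decide

theorem det_cubeRotationMatrix : ∀ σ : Perm (Fin 4), (cubeRotationMatrix σ).det = 1 := by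
  decide

def cubeRotation : Perm (Fin 4) →* SpecialLinearGroup (Fin 3) ℤ where
  toFun σ := ⟨cubeRotationMatrix σ, det_cubeRotationMatrix σ⟩
  map_one' := Subtype.ext cubeRotationMatrix_one
  map_mul' σ τ := Subtype.ext (cubeRotationMatrix_mul σ τ)

def cubeRep : Perm (Fin 4) →* SL3 :=
  (SpecialLinearGroup.map (Int.castRingHom ℂ)).comp cubeRotation

theorem cubeRep_injective : Function.Injective cubeRep :=
  (SpecialLinearGroup.map_injective (Int.cast_injective (α := ℂ))).comp fun _ _ h =>
    cubeRotationMatrix_injective (congrArg Subtype.val h)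

theorem coe_cubeRep (σ : Perm (Fin 4)) :
    (cubeRep σ : M3) = (cubeRotationMatrix σ).map (Int.cast : ℤ → ℂ) := rfl

def cubeGenerators : Set (Perm (Fin 4)) :=
  {swap 0 1 * swap 2 3, swap 0 2 * swap 1 3, swap 2 3 * swap 1 2, swap 2 3}

theorem closure_cubeGenerators : Subgroup.closure cubeGenerators = ⊤ := by
  have h := Perm.closure_cycle_adjacent_swap (isCycle_finRotate (n := 2)) support_finRotate 2
  rw [show finRotate 4 2 = 3 by decide] at h
  rw [eq_top_iff, ← h, Subgroup.closure_le, Set.insert_subset_iff, Set.singleton_subset_iff]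
  have hmem : ∀ σ ∈ cubeGenerators, σ ∈ Subgroup.closure cubeGenerators :=
    fun _ hσ => Subgroup.subset_closure hσ
  have hswap : swap (2 : Fin 4) 3 ∈ cubeGenerators := by simp [cubeGenerators]
  refine ⟨?_, hmem _ hswap⟩
  rw [show finRotate 4 = swap 0 1 * swap 2 3 * (swap 2 3 * swap 1 2) * swap 2 3 by decide]
  refine mul_mem (mul_mem (hmem _ ?_) (hmem _ ?_)) (hmem _ hswap) <;> simp [cubeGenerators]

theorem cubeRep_image_cubeGenerators :
    cubeRep '' cubeGenerators = {g : SL3 | (g : M3) ∈ ({Matrix.diagonal ![1, -1, -1],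
      Matrix.diagonal ![-1, 1, -1], Mtau, !![-1,0,0; 0,0,-1; 0,-1,0]} : Set M3)} := by
  have h₁ : (cubeRep (swap 0 1 * swap 2 3) : M3) = diagonal ![1, -1, -1] := by
    rw [coe_cubeRep, show cubeRotationMatrix (swap 0 1 * swap 2 3) =
      !![1, 0, 0; 0, -1, 0; 0, 0, -1] by decide]
    ext i j; fin_cases i <;> fin_cases j <;> simp
  have h₂ : (cubeRep (swap 0 2 * swap 1 3) : M3) = diagonal ![-1, 1, -1] := by
    rw [coe_cubeRep, show cubeRotationMatrix (swap 0 2 * swap 1 3) =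
      !![-1, 0, 0; 0, 1, 0; 0, 0, -1] by decide]
    ext i j; fin_cases i <;> fin_cases j <;> simp
  have h₃ : (cubeRep (swap 2 3 * swap 1 2) : M3) = Mtau := by
    rw [coe_cubeRep, show cubeRotationMatrix (swap 2 3 * swap 1 2) =
      !![0, 1, 0; 0, 0, 1; 1, 0, 0] by decide]
    ext i j; fin_cases i <;> fin_cases j <;> simp [Mtau]
  have h₄ : (cubeRep (swap 2 3) : M3) = !![-1,0,0; 0,0,-1; 0,-1,0] := by
    rw [coe_cubeRep, show cubeRotationMatrix (swap 2 3) =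
      !![-1, 0, 0; 0, 0, -1; 0, -1, 0] by decide]
    ext i j; fin_cases i <;> fin_cases j <;> simp
  have coe_inj (a b : SL3) : (a : M3) = b ↔ a = b := Subtype.ext_iff.symm
  ext g
  simp only [cubeGenerators, Set.image_insert_eq, Set.image_singleton, Set.mem_insert_iff,
    Set.mem_singleton_iff, Set.mem_ofPred_eq, ← h₁, ← h₂, ← h₃, ← h₄, coe_inj]

theorem GS4_eq_range_cubeRep : GS4 = cubeRep.range := by
  rw [MonoidHom.range_eq_map, ← closure_cubeGenerators, MonoidHom.map_closure,
    cubeRep_image_cubeGenerators]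
  rfl

/-- the group `G = ⟨diag(1,-1,-1), diag(-1,1,-1), M_τ, σ⟩ ≤ SL(3,ℂ)` has order
24, is isomorphic to the symmetric group `S₄`, and contains no scalar matrix other than the
identity. -/
theorem statement10 :
    Nat.card GS4 = 24 ∧
    Nonempty (GS4 ≃* Equiv.Perm (Fin 4)) ∧
    (∀ g : SL3, g ∈ GS4 → (∃ c : ℂ, (g : M3) = c • (1 : M3)) → (g : M3) = 1) := by
  have e : GS4 ≃* Perm (Fin 4) := (MulEquiv.subgroupCongr GS4_eq_range_cubeRep).trans
    (MonoidHom.ofInjective cubeRep_injective).symm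
  refine ⟨?_, ⟨e⟩, ?_⟩
  · rw [Nat.card_congr e.toEquiv, Nat.card_perm, Nat.card_fin]
    rfl
  · rintro g hg ⟨c, hc⟩
    obtain ⟨σ, rfl⟩ := GS4_eq_range_cubeRep ▸ hg
    have hσ : cubeRotation σ = 1 :=
      SpecialLinearGroup.eq_one_of_map_eq_smul_one (by decide) (cubeRotation σ) hc
    simp [cubeRep, hσ]
end
end
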